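/- arXiv:1307.0417 — 10 statements merged into one kernel-verified Lean document; each statement's English description precedes it below -/
import Mathlib

section
/- Let A be a Fischer-Servi algebra, K a finite nonempty set, and α ⊆ K × K a relation. Then the product algebra, i.e. the set of functions K → A with pointwise Heyting algebra structure and with modal operations (◇^∏ f)(j) = ⋁{ ◇(f i) : j α i } and (□^∏ f)(j) = ⋀{ □(f i) : j α i }, is again a Fischer-Servi algebra. -/
/-- The product of a Fischer-Servi algebra over a finite nonempty
set `K` with a relation `α`, with pointwise Heyting structure and the modal
operations `(◇^∏ f)(j) = ⋁{ ◇(f i) : j α i }` and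
`(□^∏ f)(j) = ⋀{ □(f i) : j α i }`, is again a Fischer-Servi algebra. -/
theorem stmt_0 {A K : Type*} [HeytingAlgebra A] [Fintype K] [Nonempty K]
    (α : K → K → Prop) [DecidableRel α] (dia box : A → A)
    (hdia_bot : dia ⊥ = ⊥)
    (hdia_sup : ∀ x y : A, dia (x ⊔ y) = dia x ⊔ dia y)
    (hbox_top : box ⊤ = ⊤)
    (hbox_inf : ∀ x y : A, box (x ⊓ y) = box x ⊓ box y)
    (hFS1 : ∀ x y : A, dia (x ⇨ y) ≤ box x ⇨ dia y)
    (hFS2 : ∀ x y : A, (dia x ⇨ box y) ≤ box (x ⇨ y))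
    (prodDia prodBox : (K → A) → (K → A))
    (hprodDia : ∀ (f : K → A) (j : K),
      prodDia f j = (Finset.univ.filter (fun i => α j i)).sup (fun i => dia (f i)))
    (hprodBox : ∀ (f : K → A) (j : K),
      prodBox f j = (Finset.univ.filter (fun i => α j i)).inf (fun i => box (f i))) :
    prodDia ⊥ = ⊥ ∧
    (∀ f g : K → A, prodDia (f ⊔ g) = prodDia f ⊔ prodDia g) ∧
    prodBox ⊤ = ⊤ ∧
    (∀ f g : K → A, prodBox (f ⊓ g) = prodBox f ⊓ prodBox g) ∧
    (∀ f g : K → A, prodDia (f ⇨ g) ≤ prodBox f ⇨ prodDia g) ∧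
    (∀ f g : K → A, (prodDia f ⇨ prodBox g) ≤ prodBox (f ⇨ g)) := by
  refine ⟨?_, ?_, ?_, ?_, ?_, ?_⟩
  · funext j
    simp [hprodDia, hdia_bot]
  · intro f g
    funext j
    simp only [hprodDia, Pi.sup_apply]
    rw [← Finset.sup_sup]
    exact Finset.sup_congr rfl (fun i _ => hdia_sup _ _)
  · funext j
    simp [hprodBox, hbox_top]
  · intro f g
    funext j
    simp only [hprodBox, Pi.inf_apply]
    rw [← Finset.inf_inf]
    exact Finset.inf_congr rfl (fun i _ => hbox_inf _ _)
  · intro f g j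
    simp only [hprodDia, hprodBox, Pi.himp_apply]
    apply Finset.sup_le
    intro i hi
    calc dia (f i ⇨ g i) ≤ box (f i) ⇨ dia (g i) := hFS1 _ _
      _ ≤ (Finset.univ.filter (fun i => α j i)).inf (fun i => box (f i)) ⇨
          (Finset.univ.filter (fun i => α j i)).sup (fun i => dia (g i)) :=
        himp_le_himp (Finset.inf_le hi) (Finset.le_sup (f := fun i => dia (g i)) hi)
  · intro f g j
    simp only [hprodDia, hprodBox, Pi.himp_apply]
    apply Finset.le_inf
    intro i hi
    calc (Finset.univ.filter (fun i => α j i)).sup (fun i => dia (f i)) ⇨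
          (Finset.univ.filter (fun i => α j i)).inf (fun i => box (g i))
        ≤ dia (f i) ⇨ box (g i) := himp_le_himp (Finset.le_sup (f := fun i => dia (f i)) hi) (Finset.inf_le hi)
      _ ≤ box (f i ⇨ g i) := hFS2 _ _
end

section
/- Let A be a monadic Heyting algebra, K a finite nonempty set, and α ⊆ K × K an equivalence relation. Then the product algebra, i.e. the set of functions K → A with pointwise Heyting algebra structure and with modal operations (◇^∏ f)(j) = ⋁{ ◇(f i) : j α i } and (□^∏ f)(j) = ⋀{ □(f i) : j α i }, is again a monadic Heyting algebra. -/
/-- The product of a monadic Heyting algebra over a finite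
nonempty set `K` with an equivalence relation `α`, with pointwise Heyting
structure and the modal operations `(◇^∏ f)(j) = ⋁{ ◇(f i) : j α i }` and
`(□^∏ f)(j) = ⋀{ □(f i) : j α i }`, is again a monadic Heyting algebra. -/
theorem stmt_1 {A K : Type*} [HeytingAlgebra A] [Fintype K] [Nonempty K]
    (α : K → K → Prop) [DecidableRel α] (hα : Equivalence α) (dia box : A → A)
    (hdia_bot : dia ⊥ = ⊥)
    (hdia_sup : ∀ x y : A, dia (x ⊔ y) = dia x ⊔ dia y)
    (hbox_top : box ⊤ = ⊤)
    (hbox_inf : ∀ x y : A, box (x ⊓ y) = box x ⊓ box y)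
    (hbox_le : ∀ x : A, box x ≤ x)
    (hle_dia : ∀ x : A, x ≤ dia x)
    (hdia_boxdia : ∀ x : A, dia x ≤ box (dia x))
    (hdiabox_box : ∀ x : A, dia (box x) ≤ box x)
    (hbox_himp : ∀ x y : A, box (x ⇨ y) ≤ dia x ⇨ dia y)
    (prodDia prodBox : (K → A) → (K → A))
    (hprodDia : ∀ (f : K → A) (j : K),
      prodDia f j = (Finset.univ.filter (fun i => α j i)).sup (fun i => dia (f i)))
    (hprodBox : ∀ (f : K → A) (j : K),
      prodBox f j = (Finset.univ.filter (fun i => α j i)).inf (fun i => box (f i))) :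
    prodDia ⊥ = ⊥ ∧
    (∀ f g : K → A, prodDia (f ⊔ g) = prodDia f ⊔ prodDia g) ∧
    prodBox ⊤ = ⊤ ∧
    (∀ f g : K → A, prodBox (f ⊓ g) = prodBox f ⊓ prodBox g) ∧
    (∀ f : K → A, prodBox f ≤ f) ∧
    (∀ f : K → A, f ≤ prodDia f) ∧
    (∀ f : K → A, prodDia f ≤ prodBox (prodDia f)) ∧
    (∀ f : K → A, prodDia (prodBox f) ≤ prodBox f) ∧
    (∀ f g : K → A, prodBox (f ⇨ g) ≤ prodDia f ⇨ prodDia g) := by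
  have hmem : ∀ j i : K, i ∈ Finset.univ.filter (fun i => α j i) ↔ α j i := by
    intro j i; simp
  have hself : ∀ j : K, j ∈ Finset.univ.filter (fun i => α j i) := by
    intro j; simp [hα.refl j]
  have hset : ∀ j i : K, α j i →
      Finset.univ.filter (fun k => α i k) = Finset.univ.filter (fun k => α j k) := by
    intro j i hji
    ext k; simp only [Finset.mem_filter, Finset.mem_univ, true_and]
    exact ⟨fun h => hα.trans hji h, fun h => hα.trans (hα.symm hji) h⟩
  have hdia_mono : ∀ x y : A, x ≤ y → dia x ≤ dia y := by
    intro x y h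
    have : dia (x ⊔ y) = dia y := by rw [sup_eq_right.mpr h]
    rw [hdia_sup] at this
    exact le_sup_left.trans this.le
  have hbox_mono : ∀ x y : A, x ≤ y → box x ≤ box y := by
    intro x y h
    have : box (x ⊓ y) = box x := by rw [inf_eq_left.mpr h]
    rw [hbox_inf] at this
    exact this.ge.trans inf_le_right
  refine ⟨?_, ?_, ?_, ?_, ?_, ?_, ?_, ?_, ?_⟩
  · funext j
    rw [hprodDia]
    refine le_antisymm (Finset.sup_le fun i _ => ?_) bot_le
    simp [hdia_bot]
  · intro f g
    funext j
    simp only [hprodDia, Pi.sup_apply, hdia_sup]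
    refine le_antisymm (Finset.sup_le fun i hi => sup_le_sup
      (Finset.le_sup (f := fun i => dia (f i)) hi) (Finset.le_sup (f := fun i => dia (g i)) hi)) (sup_le
      (Finset.sup_le fun i hi => le_trans le_sup_left (Finset.le_sup (f := fun i => dia (f i) ⊔ dia (g i)) hi))
      (Finset.sup_le fun i hi => le_trans le_sup_right (Finset.le_sup (f := fun i => dia (f i) ⊔ dia (g i)) hi)))
  · funext j
    rw [hprodBox]
    refine le_antisymm le_top (Finset.le_inf fun i _ => ?_)
    simp [hbox_top]
  · intro f g
    funext j
    simp only [hprodBox, Pi.inf_apply, hbox_inf]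
    refine le_antisymm (le_inf
      (Finset.le_inf fun i hi => le_trans (Finset.inf_le hi) inf_le_left)
      (Finset.le_inf fun i hi => le_trans (Finset.inf_le hi) inf_le_right))
      (Finset.le_inf fun i hi => inf_le_inf (Finset.inf_le hi) (Finset.inf_le hi))
  · intro f j
    rw [hprodBox]
    exact le_trans (Finset.inf_le (hself j)) (hbox_le _)
  · intro f j
    rw [hprodDia]
    exact le_trans (hle_dia _) (Finset.le_sup (f := fun i => dia (f i)) (hself j))
  · intro f j
    rw [hprodBox]
    refine Finset.le_inf fun i hi => ?_
    have hji : α j i := (hmem j i).mp hi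
    have heq : prodDia f i = prodDia f j := by
      rw [hprodDia, hprodDia, hset j i hji]
    rw [heq, hprodDia]
    refine Finset.sup_le fun k hk => ?_
    exact le_trans (hdia_boxdia _) (hbox_mono _ _ (Finset.le_sup (f := fun i => dia (f i)) hk))
  · intro f j
    rw [hprodDia, hprodBox]
    refine Finset.sup_le fun i hi => ?_
    have hji : α j i := (hmem j i).mp hi
    have heq : prodBox f i = prodBox f j := by
      rw [hprodBox, hprodBox, hset j i hji]
    rw [heq, hprodBox]
    refine Finset.le_inf fun k hk => ?_
    exact le_trans (hdia_mono _ _ ((hprodBox f j).symm ▸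
      le_trans (le_of_eq (hprodBox f j)) (Finset.inf_le hk))) (hdiabox_box _)
  · intro f g j
    simp only [Pi.himp_apply]
    rw [hprodBox, le_himp_iff, hprodDia, Finset.sup_inf_distrib_left]
    refine Finset.sup_le fun i hi => ?_
    rw [hprodDia]
    calc (Finset.univ.filter (fun i => α j i)).inf (fun i => box ((f ⇨ g) i)) ⊓ dia (f i)
        ≤ box ((f ⇨ g) i) ⊓ dia (f i) := inf_le_inf_right _ (Finset.inf_le hi)
      _ ≤ (dia (f i) ⇨ dia (g i)) ⊓ dia (f i) := by
          refine inf_le_inf_right _ ?_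
          simpa using hbox_himp (f i) (g i)
      _ ≤ dia (g i) := himp_inf_le
      _ ≤ _ := Finset.le_sup (f := fun i => dia (g i)) hi
end

section
/- Let A be a Fischer-Servi algebra, K a finite nonempty set, α ⊆ K × K a relation, and Pre : K → A. Let B be the product algebra on K → A with pointwise Heyting structure and operations (◇^∏ f)(j) = ⋁{ ◇(f i) : j α i } and (□^∏ f)(j) = ⋀{ □(f i) : j α i }. Consider the set B_Pre = { f : K → A | f ≤ Pre pointwise } with bottom ⊥, top Pre, pointwise meets and joins, implication f →' g = Pre ∧ (f → g) (pointwise), ◇' f = Pre ∧ ◇^∏ f, and □' f = Pre ∧ □^∏(Pre → f). Then B_Pre is a Fischer-Servi algebra: f →' g is the Heyting implication of B_Pre (for f, g, h ≤ Pre: h ∧ f ≤ g iff h ≤ f →' g), ◇' preserves finite joins of B_Pre, □' preserves finite meets of B_Pre (in particular □' Pre = Pre), and ◇'(f →' g) ≤ □' f →' ◇' g and (◇' f →' □' g) ≤ □'(f →' g) hold for all f, g ≤ Pre. -/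
/-- For a Fischer-Servi algebra `A`, a finite nonempty `K`,
`α ⊆ K × K` and `Pre : K → A`, the updated algebra
`B_Pre = { f : K → A | f ≤ Pre }` with `⊥`, top `Pre`, pointwise meets/joins,
implication `f →' g = Pre ⊓ (f ⇨ g)`, `◇' f = Pre ⊓ ◇^∏ f` and
`□' f = Pre ⊓ □^∏(Pre ⇨ f)` is again a Fischer-Servi algebra. -/
theorem stmt_10 {A K : Type*} [HeytingAlgebra A] [Fintype K] [Nonempty K]
    (α : K → K → Prop) [DecidableRel α] (dia box : A → A)
    (hdia_bot : dia ⊥ = ⊥)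
    (hdia_sup : ∀ x y : A, dia (x ⊔ y) = dia x ⊔ dia y)
    (hbox_top : box ⊤ = ⊤)
    (hbox_inf : ∀ x y : A, box (x ⊓ y) = box x ⊓ box y)
    (hFS1 : ∀ x y : A, dia (x ⇨ y) ≤ box x ⇨ dia y)
    (hFS2 : ∀ x y : A, (dia x ⇨ box y) ≤ box (x ⇨ y))
    (Pre : K → A)
    (prodDia prodBox : (K → A) → (K → A))
    (hprodDia : ∀ (f : K → A) (j : K),
      prodDia f j = (Finset.univ.filter (fun i => α j i)).sup (fun i => dia (f i)))
    (hprodBox : ∀ (f : K → A) (j : K),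
      prodBox f j = (Finset.univ.filter (fun i => α j i)).inf (fun i => box (f i)))
    (himp' : (K → A) → (K → A) → (K → A)) (dia' box' : (K → A) → (K → A))
    (hhimp' : ∀ f g : K → A, himp' f g = Pre ⊓ (f ⇨ g))
    (hdia' : ∀ f : K → A, dia' f = Pre ⊓ prodDia f)
    (hbox' : ∀ f : K → A, box' f = Pre ⊓ prodBox (Pre ⇨ f)) :
    (∀ f g h : K → A, f ≤ Pre → g ≤ Pre → h ≤ Pre → (h ⊓ f ≤ g ↔ h ≤ himp' f g)) ∧
    dia' ⊥ = ⊥ ∧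
    (∀ f g : K → A, f ≤ Pre → g ≤ Pre → dia' (f ⊔ g) = dia' f ⊔ dia' g) ∧
    box' Pre = Pre ∧
    (∀ f g : K → A, f ≤ Pre → g ≤ Pre → box' (f ⊓ g) = box' f ⊓ box' g) ∧
    (∀ f g : K → A, f ≤ Pre → g ≤ Pre →
      dia' (himp' f g) ≤ himp' (box' f) (dia' g)) ∧
    (∀ f g : K → A, f ≤ Pre → g ≤ Pre →
      himp' (dia' f) (box' g) ≤ box' (himp' f g)) := by
  have hdmono : ∀ x y : A, x ≤ y → dia x ≤ dia y := fun x y h => by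
    have : dia y = dia x ⊔ dia y := by rw [← hdia_sup, sup_eq_right.mpr h]
    rw [this]; exact le_sup_left
  have hbmono : ∀ x y : A, x ≤ y → box x ≤ box y := fun x y h => by
    have : box x = box x ⊓ box y := by rw [← hbox_inf, inf_eq_left.mpr h]
    rw [this]; exact inf_le_right
  refine ⟨?_, ?_, ?_, ?_, ?_, ?_, ?_⟩
  · intro f g h _ _ hh
    rw [hhimp']
    constructor
    · intro h1; exact le_inf hh (le_himp_iff.mpr h1)
    · intro h1; exact le_himp_iff.mp (h1.trans inf_le_right)
  · rw [hdia']
    have : prodDia ⊥ = (⊥ : K → A) := by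
      funext j; rw [hprodDia]
      simp [Pi.bot_apply, hdia_bot]
    rw [this, inf_bot_eq]
  · intro f g _ _
    rw [hdia', hdia', hdia']
    funext j
    simp only [Pi.inf_apply, Pi.sup_apply]
    rw [hprodDia, hprodDia, hprodDia]
    have : ((Finset.univ.filter (fun i => α j i)).sup fun i => dia ((f ⊔ g) i))
        = ((Finset.univ.filter (fun i => α j i)).sup fun i => dia (f i))
          ⊔ ((Finset.univ.filter (fun i => α j i)).sup fun i => dia (g i)) := by
      rw [← Finset.sup_sup]
      congr 1; funext i
      simp [Pi.sup_apply, hdia_sup]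
    rw [this, inf_sup_left]
  · rw [hbox']
    have : prodBox (Pre ⇨ Pre) = (⊤ : K → A) := by
      funext j; rw [hprodBox]
      simp [Pi.himp_apply, himp_self, hbox_top]
    rw [this, inf_top_eq]
  · intro f g _ _
    rw [hbox', hbox', hbox']
    funext j
    simp only [Pi.inf_apply]
    rw [hprodBox, hprodBox, hprodBox]
    have : ((Finset.univ.filter (fun i => α j i)).inf fun i => box ((Pre ⇨ f ⊓ g) i))
        = ((Finset.univ.filter (fun i => α j i)).inf fun i => box ((Pre ⇨ f) i))
          ⊓ ((Finset.univ.filter (fun i => α j i)).inf fun i => box ((Pre ⇨ g) i)) := by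
      rw [← Finset.inf_inf]
      congr 1; funext i
      simp [Pi.himp_apply, Pi.inf_apply, himp_inf_distrib, hbox_inf]
    rw [this, inf_inf_distrib_left]
  · intro f g _ _
    rw [hdia', hbox', hdia', hhimp', hhimp']
    intro j
    simp only [Pi.inf_apply, Pi.himp_apply]
    rw [hprodDia, hprodBox, hprodDia]
    set S := Finset.univ.filter (fun i => α j i) with hS
    refine le_inf inf_le_left (le_himp_iff.mpr ?_)
    refine le_inf (inf_le_left.trans inf_le_left) ?_
    calc Pre j ⊓ S.sup (fun i => dia ((Pre ⊓ (f ⇨ g)) i))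
          ⊓ (Pre j ⊓ S.inf fun i => box ((Pre ⇨ f) i))
        ≤ S.sup (fun i => dia ((Pre ⊓ (f ⇨ g)) i))
          ⊓ S.inf (fun i => box ((Pre ⇨ f) i)) := by
          exact inf_le_inf (inf_le_right) (inf_le_right)
      _ = S.sup (fun i => dia ((Pre ⊓ (f ⇨ g)) i) ⊓ S.inf (fun i => box ((Pre ⇨ f) i))) := by
          rw [Finset.sup_inf_distrib_right]
      _ ≤ S.sup fun i => dia (g i) := by
          refine Finset.sup_le fun i hi => ?_
          refine le_trans (inf_le_inf le_rfl (Finset.inf_le hi)) ?_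
          have h1 : (Pre ⊓ (f ⇨ g)) i ≤ (Pre i ⇨ f i) ⇨ g i := by
            simp only [Pi.inf_apply, Pi.himp_apply]
            refine le_himp_iff.mpr ?_
            calc Pre i ⊓ (f i ⇨ g i) ⊓ (Pre i ⇨ f i)
                ≤ (f i ⇨ g i) ⊓ f i := le_inf (inf_le_left.trans inf_le_right)
                  ((inf_le_inf inf_le_left le_rfl).trans inf_himp_le)
              _ ≤ g i := himp_inf_le
          have h2 : dia ((Pre ⊓ (f ⇨ g)) i) ⊓ box ((Pre ⇨ f) i) ≤ dia (g i) := by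
            calc dia ((Pre ⊓ (f ⇨ g)) i) ⊓ box ((Pre ⇨ f) i)
                ≤ (box (Pre i ⇨ f i) ⇨ dia (g i)) ⊓ box (Pre i ⇨ f i) := by
                  simp only [Pi.himp_apply]
                  exact inf_le_inf ((hdmono _ _ h1).trans (hFS1 _ _)) le_rfl
              _ ≤ dia (g i) := himp_inf_le
          exact h2.trans (Finset.le_sup (f := fun i => dia (g i)) hi)
  · intro f g hf hg
    rw [hdia', hbox', hbox', hhimp', hhimp']
    intro j
    simp only [Pi.inf_apply, Pi.himp_apply]
    rw [hprodDia, hprodBox, hprodBox]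
    set S := Finset.univ.filter (fun i => α j i) with hS
    refine le_inf inf_le_left (Finset.le_inf fun i hi => ?_)
    have e1 : (Pre ⇨ Pre ⊓ (f ⇨ g)) i = f i ⇨ g i := by
      simp only [Pi.himp_apply, Pi.inf_apply]
      rw [himp_inf_distrib, himp_self, top_inf_eq, himp_himp,
        inf_eq_right.mpr (hf i)]
    rw [e1]
    have key : dia (f i) ⇨ box ((Pre ⇨ g) i) ≤ box (f i ⇨ g i) := by
      simp only [Pi.himp_apply]
      calc dia (f i) ⇨ box (Pre i ⇨ g i)
          ≤ box (f i ⇨ Pre i ⇨ g i) := hFS2 _ _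
        _ = box (f i ⇨ g i) := by rw [himp_himp, inf_eq_left.mpr (hf i)]
    refine le_trans (le_himp_iff.mpr ?_) key
    calc Pre j ⊓ ((Pre j ⊓ S.sup fun i => dia (f i)) ⇨
          (Pre j ⊓ S.inf fun i => box ((Pre ⇨ g) i))) ⊓ dia (f i)
        ≤ (Pre j ⊓ S.sup fun i => dia (f i)) ⊓
          ((Pre j ⊓ S.sup fun i => dia (f i)) ⇨
            (Pre j ⊓ S.inf fun i => box ((Pre ⇨ g) i))) :=
          le_inf (le_inf (inf_le_left.trans inf_le_left)
            (inf_le_right.trans (Finset.le_sup (f := fun i => dia (f i)) hi)))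
            (inf_le_left.trans inf_le_right)
      _ ≤ Pre j ⊓ S.inf fun i => box ((Pre ⇨ g) i) := inf_himp_le
      _ ≤ box ((Pre ⇨ g) i) := inf_le_right.trans (Finset.inf_le hi)
end

section
/- Let A be a monadic Heyting algebra, K a finite nonempty set, α ⊆ K × K an equivalence relation, and Pre : K → A. Let B be the product algebra on K → A with pointwise Heyting structure and operations (◇^∏ f)(j) = ⋁{ ◇(f i) : j α i } and (□^∏ f)(j) = ⋀{ □(f i) : j α i }. Consider the set B_Pre = { f : K → A | f ≤ Pre pointwise } with bottom ⊥, top Pre, pointwise meets and joins, implication f →' g = Pre ∧ (f → g) (pointwise), ◇' f = Pre ∧ ◇^∏ f, and □' f = Pre ∧ □^∏(Pre → f). Then B_Pre is a monadic Heyting algebra: f →' g is the Heyting implication of B_Pre, ◇' preserves finite joins, □' preserves finite meets, and for all f, g ≤ Pre: □' f ≤ f, f ≤ ◇' f, ◇' f ≤ □' ◇' f, ◇' □' f ≤ □' f, and □'(f →' g) ≤ ◇' f →' ◇' g. -/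
lemma aux_inf_inf {β ι : Type*} [SemilatticeInf β] [OrderTop β] (s : Finset ι) (f g : ι → β) :
    s.inf (fun i => f i ⊓ g i) = s.inf f ⊓ s.inf g := by
  apply le_antisymm
  · exact le_inf (Finset.le_inf fun i hi => (Finset.inf_le hi).trans inf_le_left)
      (Finset.le_inf fun i hi => (Finset.inf_le hi).trans inf_le_right)
  · exact Finset.le_inf fun i hi =>
      le_inf (inf_le_left.trans (Finset.inf_le hi)) (inf_le_right.trans (Finset.inf_le hi))

lemma aux_sup_sup {β ι : Type*} [SemilatticeSup β] [OrderBot β] (s : Finset ι) (f g : ι → β) :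
    s.sup (fun i => f i ⊔ g i) = s.sup f ⊔ s.sup g := by
  apply le_antisymm
  · exact Finset.sup_le fun i hi =>
      sup_le ((Finset.le_sup hi).trans le_sup_left) ((Finset.le_sup hi).trans le_sup_right)
  · exact sup_le (Finset.sup_le fun i hi => le_sup_left.trans
        (Finset.le_sup (f := fun i => f i ⊔ g i) hi))
      (Finset.sup_le fun i hi => le_sup_right.trans
        (Finset.le_sup (f := fun i => f i ⊔ g i) hi))

/-- For a monadic Heyting algebra `A`, a finite nonempty `K`,
an equivalence relation `α ⊆ K × K` and `Pre : K → A`, the updated algebra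
`B_Pre = { f : K → A | f ≤ Pre }` with `⊥`, top `Pre`, pointwise meets/joins,
implication `f →' g = Pre ⊓ (f ⇨ g)`, `◇' f = Pre ⊓ ◇^∏ f` and
`□' f = Pre ⊓ □^∏(Pre ⇨ f)` is again a monadic Heyting algebra. -/
theorem stmt_11 {A K : Type*} [HeytingAlgebra A] [Fintype K] [Nonempty K]
    (α : K → K → Prop) [DecidableRel α] (hα : Equivalence α) (dia box : A → A)
    (hdia_bot : dia ⊥ = ⊥)
    (hdia_sup : ∀ x y : A, dia (x ⊔ y) = dia x ⊔ dia y)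
    (hbox_top : box ⊤ = ⊤)
    (hbox_inf : ∀ x y : A, box (x ⊓ y) = box x ⊓ box y)
    (hbox_le : ∀ x : A, box x ≤ x)
    (hle_dia : ∀ x : A, x ≤ dia x)
    (hdia_boxdia : ∀ x : A, dia x ≤ box (dia x))
    (hdiabox_box : ∀ x : A, dia (box x) ≤ box x)
    (hbox_himp : ∀ x y : A, box (x ⇨ y) ≤ dia x ⇨ dia y)
    (Pre : K → A)
    (prodDia prodBox : (K → A) → (K → A))
    (hprodDia : ∀ (f : K → A) (j : K),
      prodDia f j = (Finset.univ.filter (fun i => α j i)).sup (fun i => dia (f i)))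
    (hprodBox : ∀ (f : K → A) (j : K),
      prodBox f j = (Finset.univ.filter (fun i => α j i)).inf (fun i => box (f i)))
    (himp' : (K → A) → (K → A) → (K → A)) (dia' box' : (K → A) → (K → A))
    (hhimp' : ∀ f g : K → A, himp' f g = Pre ⊓ (f ⇨ g))
    (hdia' : ∀ f : K → A, dia' f = Pre ⊓ prodDia f)
    (hbox' : ∀ f : K → A, box' f = Pre ⊓ prodBox (Pre ⇨ f)) :
    (∀ f g h : K → A, f ≤ Pre → g ≤ Pre → h ≤ Pre → (h ⊓ f ≤ g ↔ h ≤ himp' f g)) ∧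
    dia' ⊥ = ⊥ ∧
    (∀ f g : K → A, f ≤ Pre → g ≤ Pre → dia' (f ⊔ g) = dia' f ⊔ dia' g) ∧
    box' Pre = Pre ∧
    (∀ f g : K → A, f ≤ Pre → g ≤ Pre → box' (f ⊓ g) = box' f ⊓ box' g) ∧
    (∀ f : K → A, f ≤ Pre → box' f ≤ f) ∧
    (∀ f : K → A, f ≤ Pre → f ≤ dia' f) ∧
    (∀ f : K → A, f ≤ Pre → dia' f ≤ box' (dia' f)) ∧
    (∀ f : K → A, f ≤ Pre → dia' (box' f) ≤ box' f) ∧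
    (∀ f g : K → A, f ≤ Pre → g ≤ Pre →
      box' (himp' f g) ≤ himp' (dia' f) (dia' g)) := by
  classical
  have hmem : ∀ j : K, j ∈ Finset.univ.filter (fun i => α j i) := fun j => by
    simp [hα.refl j]
  have hSeq : ∀ {j i : K}, i ∈ Finset.univ.filter (fun i' => α j i') →
      Finset.univ.filter (fun k => α i k) = Finset.univ.filter (fun k => α j k) := by
    intro j i hi
    simp only [Finset.mem_filter, Finset.mem_univ, true_and] at hi
    ext k
    simp only [Finset.mem_filter, Finset.mem_univ, true_and]
    exact ⟨fun h => hα.trans hi h, fun h => hα.trans (hα.symm hi) h⟩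
  have hdia_mono : ∀ {x y : A}, x ≤ y → dia x ≤ dia y := by
    intro x y h
    have : dia y = dia x ⊔ dia y := by rw [← hdia_sup, sup_eq_right.2 h]
    rw [this]; exact le_sup_left
  have hbox_mono : ∀ {x y : A}, x ≤ y → box x ≤ box y := by
    intro x y h
    have : box x = box x ⊓ box y := by rw [← hbox_inf, inf_eq_left.2 h]
    rw [this]; exact inf_le_right
  refine ⟨?_, ?_, ?_, ?_, ?_, ?_, ?_, ?_, ?_, ?_⟩
  · -- Heyting implication
    intro f g h hf hg hh
    rw [hhimp']
    constructor
    · intro hle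
      exact le_inf hh (le_himp_iff.2 hle)
    · intro hle
      exact le_himp_iff.1 (hle.trans inf_le_right)
  · -- dia' ⊥ = ⊥
    rw [hdia']
    funext j
    simp [hprodDia, hdia_bot]
  · -- dia' sup
    intro f g _ _
    rw [hdia', hdia', hdia']
    funext j
    simp only [Pi.inf_apply, Pi.sup_apply]
    rw [hprodDia, hprodDia, hprodDia]
    have : ((Finset.univ.filter (fun i => α j i)).sup fun i => dia ((f ⊔ g) i)) =
        ((Finset.univ.filter (fun i => α j i)).sup fun i => dia (f i)) ⊔
        ((Finset.univ.filter (fun i => α j i)).sup fun i => dia (g i)) := by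
      rw [← aux_sup_sup]
      exact Finset.sup_congr rfl fun i _ => by simp [hdia_sup]
    rw [this, inf_sup_left]
  · -- box' Pre = Pre
    rw [hbox', himp_self]
    funext j
    simp only [Pi.inf_apply]
    rw [hprodBox]
    have : ((Finset.univ.filter (fun i => α j i)).inf fun i => box ((⊤ : K → A) i)) = ⊤ := by
      simp [hbox_top]
    rw [this]
    simp
  · -- box' inf
    intro f g _ _
    rw [hbox', hbox', hbox']
    funext j
    simp only [Pi.inf_apply]
    rw [hprodBox, hprodBox, hprodBox]
    have : ((Finset.univ.filter (fun i => α j i)).inf fun i => box ((Pre ⇨ f ⊓ g) i)) =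
        ((Finset.univ.filter (fun i => α j i)).inf fun i => box ((Pre ⇨ f) i)) ⊓
        ((Finset.univ.filter (fun i => α j i)).inf fun i => box ((Pre ⇨ g) i)) := by
      rw [← aux_inf_inf]
      refine Finset.inf_congr rfl fun i _ => ?_
      simp [Pi.himp_apply, himp_inf_distrib, hbox_inf]
    rw [this, inf_inf_distrib_left]
  · -- box' f ≤ f
    intro f hf
    rw [hbox', Pi.le_def]
    intro j
    simp only [Pi.inf_apply]
    have h1 : prodBox (Pre ⇨ f) j ≤ Pre j ⇨ f j := by
      rw [hprodBox]
      refine (Finset.inf_le (hmem j)).trans ?_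
      simpa using hbox_le ((Pre ⇨ f) j)
    calc Pre j ⊓ prodBox (Pre ⇨ f) j ≤ Pre j ⊓ (Pre j ⇨ f j) := inf_le_inf_left _ h1
      _ = Pre j ⊓ f j := inf_himp _ _
      _ ≤ f j := inf_le_right
  · -- f ≤ dia' f
    intro f hf
    rw [hdia']
    refine le_inf hf ?_
    rw [Pi.le_def]; intro j
    rw [hprodDia]
    exact (hle_dia (f j)).trans (Finset.le_sup (f := fun i => dia (f i)) (hmem j))
  · -- dia' f ≤ box' (dia' f)
    intro f hf
    rw [hbox']
    refine le_inf ?_ ?_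
    · rw [hdia']; exact inf_le_left
    · rw [Pi.le_def]; intro j
      rw [hprodBox]
      refine Finset.le_inf fun i hi => ?_
      have hD : ∀ k : K, dia' f k =
          Pre k ⊓ (Finset.univ.filter (fun i' => α k i')).sup (fun i' => dia (f i')) := by
        intro k; rw [hdia']; simp only [Pi.inf_apply]; rw [hprodDia]
      rw [hD j]
      set D := (Finset.univ.filter (fun i' => α j i')).sup (fun i' => dia (f i')) with hDdef
      have hDbox : D ≤ box D :=
        Finset.sup_le fun i' hi' => (hdia_boxdia (f i')).trans (hbox_mono (hDdef ▸ Finset.le_sup (f := fun i' => dia (f i')) hi'))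
      have hle : D ≤ (Pre ⇨ dia' f) i := by
        simp only [Pi.himp_apply]
        rw [hD i, hSeq hi, ← hDdef]
        exact le_himp_iff.2 (by rw [inf_comm])
      exact inf_le_right.trans (hDbox.trans (hbox_mono hle))
  · -- dia' (box' f) ≤ box' f
    intro f hf
    rw [hbox' f, hdia']
    refine le_inf inf_le_left (inf_le_right.trans ?_)
    rw [Pi.le_def]; intro j
    rw [hprodDia, hprodBox]
    refine Finset.sup_le fun i hi => ?_
    simp only [Pi.inf_apply]
    refine le_trans (hdia_mono inf_le_right) ?_
    rw [hprodBox, hSeq hi]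
    refine Finset.le_inf fun k hk => ?_
    exact (hdia_mono (Finset.inf_le hk)).trans (hdiabox_box _)
  · -- box' (himp' f g) ≤ himp' (dia' f) (dia' g)
    intro f g hf hg
    rw [hhimp' f g, hbox', hhimp', hdia' f, hdia' g]
    refine le_inf inf_le_left (le_himp_iff.2 ?_)
    rw [Pi.le_def]; intro j
    simp only [Pi.inf_apply]
    rw [hprodBox, hprodDia, hprodDia]
    have hB : ∀ i : K, box ((Pre ⇨ Pre ⊓ (f ⇨ g)) i) = box (f i ⇨ g i) := by
      intro i
      simp only [Pi.himp_apply, Pi.inf_apply]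
      rw [himp_inf_distrib, himp_self, top_inf_eq, himp_himp, inf_eq_right.2 (hf i)]
    refine le_inf (inf_le_left.trans inf_le_left) ?_
    have key : ((Finset.univ.filter (fun i => α j i)).inf fun i => box ((Pre ⇨ Pre ⊓ (f ⇨ g)) i)) ⊓
        ((Finset.univ.filter (fun i => α j i)).sup fun i => dia (f i)) ≤
        ((Finset.univ.filter (fun i => α j i)).sup fun i => dia (g i)) := by
      rw [Finset.sup_inf_distrib_left]
      refine Finset.sup_le fun i hi => ?_
      have h1 : ((Finset.univ.filter (fun i' => α j i')).inf
          fun i' => box ((Pre ⇨ Pre ⊓ (f ⇨ g)) i')) ≤ dia (f i) ⇨ dia (g i) := by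
        refine (Finset.inf_le hi).trans ?_
        rw [hB i]
        exact hbox_himp _ _
      exact le_trans (inf_le_inf_right _ h1) (himp_inf_le.trans (Finset.le_sup (f := fun i => dia (g i)) hi))
    calc (Pre j ⊓ _) ⊓ (Pre j ⊓ _) ≤ _ ⊓ _ := inf_le_inf inf_le_right inf_le_right
      _ ≤ _ := key
end

section
/- Let A be a Heyting algebra with maps ◇, ■, ◆, □ : A → A forming adjoint pairs (◇x ≤ y iff x ≤ ■y, and ◆x ≤ y iff x ≤ □y). Let K be a finite nonempty set, α ⊆ K × K a relation, and Pre : K → A. On the pointwise product define (◇^∏ f)(j) = ⋁{ ◇(f i) : j α i }, (□^∏ f)(j) = ⋀{ □(f i) : j α i }, (◆^∏ f)(j) = ⋁{ ◆(f i) : i α j }, (■^∏ f)(j) = ⋀{ ■(f i) : i α j }, and on the set B_Pre = { f : K → A | f ≤ Pre pointwise } define ◇' f = Pre ∧ ◇^∏ f, ■' f = Pre ∧ ■^∏(Pre → f), ◆' f = Pre ∧ ◆^∏ f, and □' f = Pre ∧ □^∏(Pre → f). Then for all f, g ≤ Pre: ◇' f ≤ g iff f ≤ ■' g, and ◆' f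 ≤ g iff f ≤ □' g (so the updated algebra is again a tense Heyting algebra with operators). -/
/-- For a Heyting algebra `A` with adjoint pairs `◇ ⊣ ■` and
`◆ ⊣ □`, a finite nonempty `K`, `α ⊆ K × K` and `Pre : K → A`, the updated
operations `◇' f = Pre ⊓ ◇^∏ f`, `■' f = Pre ⊓ ■^∏(Pre ⇨ f)`,
`◆' f = Pre ⊓ ◆^∏ f`, `□' f = Pre ⊓ □^∏(Pre ⇨ f)` on
`B_Pre = { f | f ≤ Pre }` again form adjoint pairs: for all `f, g ≤ Pre`,
`◇' f ≤ g ↔ f ≤ ■' g` and `◆' f ≤ g ↔ f ≤ □' g`. -/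
theorem stmt_12 {A K : Type*} [HeytingAlgebra A] [Fintype K] [Nonempty K]
    (α : K → K → Prop) [DecidableRel α]
    (dia bbox bdia box : A → A)
    (hadj₁ : ∀ x y : A, dia x ≤ y ↔ x ≤ bbox y)
    (hadj₂ : ∀ x y : A, bdia x ≤ y ↔ x ≤ box y)
    (Pre : K → A)
    (prodDia prodBox prodBDia prodBBox : (K → A) → (K → A))
    (hprodDia : ∀ (f : K → A) (j : K),
      prodDia f j = (Finset.univ.filter (fun i => α j i)).sup (fun i => dia (f i)))
    (hprodBox : ∀ (f : K → A) (j : K),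
      prodBox f j = (Finset.univ.filter (fun i => α j i)).inf (fun i => box (f i)))
    (hprodBDia : ∀ (f : K → A) (j : K),
      prodBDia f j = (Finset.univ.filter (fun i => α i j)).sup (fun i => bdia (f i)))
    (hprodBBox : ∀ (f : K → A) (j : K),
      prodBBox f j = (Finset.univ.filter (fun i => α i j)).inf (fun i => bbox (f i)))
    (dia' bbox' bdia' box' : (K → A) → (K → A))
    (hdia' : ∀ f : K → A, dia' f = Pre ⊓ prodDia f)
    (hbbox' : ∀ f : K → A, bbox' f = Pre ⊓ prodBBox (Pre ⇨ f))
    (hbdia' : ∀ f : K → A, bdia' f = Pre ⊓ prodBDia f)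
    (hbox' : ∀ f : K → A, box' f = Pre ⊓ prodBox (Pre ⇨ f)) :
    ∀ f g : K → A, f ≤ Pre → g ≤ Pre →
      (dia' f ≤ g ↔ f ≤ bbox' g) ∧ (bdia' f ≤ g ↔ f ≤ box' g) := by
  intro f g hf hg
  constructor
  · constructor
    · intro h i
      rw [hbbox']
      refine le_inf_iff.2 ⟨hf i, ?_⟩
      rw [hprodBBox, Finset.le_inf_iff]
      intro j hj
      rw [← hadj₁, Pi.himp_apply, le_himp_iff, inf_comm]
      rw [Finset.mem_filter] at hj
      have h1 : dia (f i) ≤ prodDia f j := by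
        rw [hprodDia]
        exact Finset.le_sup (f := fun i => dia (f i))
          (Finset.mem_filter.2 ⟨Finset.mem_univ i, hj.2⟩)
      have h2 : Pre j ⊓ prodDia f j ≤ g j := by
        have := h j; rw [hdia'] at this; exact this
      exact le_trans (inf_le_inf_left _ h1) h2
    · intro h j
      rw [hdia', Pi.inf_apply, inf_comm, ← le_himp_iff, hprodDia, Finset.sup_le_iff]
      intro i hi
      rw [Finset.mem_filter] at hi
      rw [hadj₁]
      have := h i
      rw [hbbox', Pi.inf_apply, le_inf_iff, hprodBBox,
        Finset.le_inf_iff] at this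
      have := this.2 j (Finset.mem_filter.2 ⟨Finset.mem_univ j, hi.2⟩)
      rwa [Pi.himp_apply] at this
  · constructor
    · intro h i
      rw [hbox']
      refine le_inf_iff.2 ⟨hf i, ?_⟩
      rw [hprodBox, Finset.le_inf_iff]
      intro j hj
      rw [← hadj₂, Pi.himp_apply, le_himp_iff, inf_comm]
      rw [Finset.mem_filter] at hj
      have h1 : bdia (f i) ≤ prodBDia f j := by
        rw [hprodBDia]
        exact Finset.le_sup (f := fun i => bdia (f i))
          (Finset.mem_filter.2 ⟨Finset.mem_univ i, hj.2⟩)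
      have h2 : Pre j ⊓ prodBDia f j ≤ g j := by
        have := h j; rw [hbdia'] at this; exact this
      exact le_trans (inf_le_inf_left _ h1) h2
    · intro h j
      rw [hbdia', Pi.inf_apply, inf_comm, ← le_himp_iff, hprodBDia, Finset.sup_le_iff]
      intro i hi
      rw [Finset.mem_filter] at hi
      rw [hadj₂]
      have := h i
      rw [hbox', Pi.inf_apply, le_inf_iff, hprodBox,
        Finset.le_inf_iff] at this
      have := this.2 j (Finset.mem_filter.2 ⟨Finset.mem_univ j, hi.2⟩)
      rwa [Pi.himp_apply] at this
end

section
/- Let A be a Heyting algebra with monotone maps ◇, □ : A → A (x ≤ y implies ◇x ≤ ◇y and □x ≤ □y). Then the following three conditions are pairwise equivalent: (1) for all p, q: ◇(p → q) ≤ □p → ◇q; (2) for all p, q: □p ∧ ◇q ≤ ◇(p ∧ q); (3) for all p, q: □(p → q) ≤ ◇p → ◇q. -/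
/-- For a Heyting algebra `A` with monotone maps `◇, □ : A → A`,
the following are pairwise equivalent: (1) `◇(p ⇨ q) ≤ □p ⇨ ◇q` for all `p, q`;
(2) `□p ⊓ ◇q ≤ ◇(p ⊓ q)` for all `p, q`; (3) `□(p ⇨ q) ≤ ◇p ⇨ ◇q` for all
`p, q`. -/
theorem stmt_13 {A : Type*} [HeytingAlgebra A] (dia box : A → A)
    (hdia : ∀ x y : A, x ≤ y → dia x ≤ dia y)
    (hbox : ∀ x y : A, x ≤ y → box x ≤ box y) :
    ((∀ p q : A, dia (p ⇨ q) ≤ box p ⇨ dia q) ↔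
      (∀ p q : A, box p ⊓ dia q ≤ dia (p ⊓ q))) ∧
    ((∀ p q : A, box p ⊓ dia q ≤ dia (p ⊓ q)) ↔
      (∀ p q : A, box (p ⇨ q) ≤ dia p ⇨ dia q)) := by
  constructor
  · constructor
    · intro h p q
      rw [inf_comm]
      rw [← le_himp_iff]
      calc dia q ≤ dia (p ⇨ p ⊓ q) := hdia _ _ (le_himp_iff.mpr (by simp [inf_comm]))
        _ ≤ box p ⇨ dia (p ⊓ q) := h p (p ⊓ q)
    · intro h p q
      rw [le_himp_iff, inf_comm]
      calc box p ⊓ dia (p ⇨ q) ≤ dia (p ⊓ (p ⇨ q)) := h p (p ⇨ q)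
        _ ≤ dia q := hdia _ _ (by simp [inf_comm, himp_inf_le])
  · constructor
    · intro h p q
      rw [le_himp_iff, inf_comm]
      calc dia p ⊓ box (p ⇨ q) ≤ box (p ⇨ q) ⊓ dia p := by rw [inf_comm]
        _ ≤ dia ((p ⇨ q) ⊓ p) := h (p ⇨ q) p
        _ ≤ dia q := hdia _ _ himp_inf_le
    · intro h p q
      calc box p ⊓ dia q ≤ (dia q ⇨ dia (p ⊓ q)) ⊓ dia q := by
            gcongr
            calc box p ≤ box (q ⇨ p ⊓ q) := hbox _ _ (le_himp_iff.mpr (by simp [inf_comm]))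
              _ ≤ dia q ⇨ dia (p ⊓ q) := h q (p ⊓ q)
        _ ≤ dia (p ⊓ q) := himp_inf_le
end

section
/- Let (W, ≤, R) be an IK-frame in which R is an equivalence relation. Then the complex algebra F⁺, i.e. the lattice of downward-closed subsets of W with ◇X = { w : ∃v, w R v and v ∈ X }, □X = { w : for all u, v, if u ≤ w and u R v then v ∈ X }, and X → Y = { w : for all v ≤ w, v ∈ X implies v ∈ Y }, is a monadic Heyting algebra: in addition to ◇ preserving finite unions and □ preserving finite intersections, for all downward-closed X, Y: □X ⊆ X, X ⊆ ◇X, ◇X ⊆ □◇X, ◇□X ⊆ □X, and □(X → Y) ⊆ ◇X → ◇Y. -/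
/-- If `(W, ≤, R)` is an IK-frame in which `R` is an equivalence
relation, then its complex algebra of downward-closed subsets is a monadic
Heyting algebra: `◇` preserves finite unions, `□` preserves finite
intersections, and for all downward-closed `X, Y`: `□X ⊆ X`, `X ⊆ ◇X`,
`◇X ⊆ □◇X`, `◇□X ⊆ □X`, and `□(X → Y) ⊆ ◇X → ◇Y`. -/
theorem stmt_15 {W : Type*} [PartialOrder W] (R : W → W → Prop)
    (hfr₁ : ∀ x z : W, (∃ y, R x y ∧ z ≤ y) → ∃ y, y ≤ x ∧ R y z)
    (hfr₂ : ∀ x z : W, (∃ y, x ≤ y ∧ R y z) → ∃ y, R x y ∧ y ≤ z)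
    (hfr₃ : ∀ x z : W,
      R x z ↔ ((∃ y, y ≤ x ∧ R y z) ∧ (∃ y, R x y ∧ y ≤ z)))
    (hequiv : Equivalence R)
    (diaS boxS : Set W → Set W) (himpS : Set W → Set W → Set W)
    (hdiaS : ∀ X : Set W, diaS X = {w : W | ∃ v, R w v ∧ v ∈ X})
    (hboxS : ∀ X : Set W, boxS X = {w : W | ∀ u v, u ≤ w → R u v → v ∈ X})
    (hhimpS : ∀ X Y : Set W, himpS X Y = {w : W | ∀ v, v ≤ w → v ∈ X → v ∈ Y}) :
    diaS ∅ = ∅ ∧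
    (∀ X Y : Set W, IsLowerSet X → IsLowerSet Y →
      diaS (X ∪ Y) = diaS X ∪ diaS Y) ∧
    boxS Set.univ = Set.univ ∧
    (∀ X Y : Set W, IsLowerSet X → IsLowerSet Y →
      boxS (X ∩ Y) = boxS X ∩ boxS Y) ∧
    (∀ X : Set W, IsLowerSet X → boxS X ⊆ X) ∧
    (∀ X : Set W, IsLowerSet X → X ⊆ diaS X) ∧
    (∀ X : Set W, IsLowerSet X → diaS X ⊆ boxS (diaS X)) ∧
    (∀ X : Set W, IsLowerSet X → diaS (boxS X) ⊆ boxS X) ∧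
    (∀ X Y : Set W, IsLowerSet X → IsLowerSet Y →
      boxS (himpS X Y) ⊆ himpS (diaS X) (diaS Y)) := by
  obtain ⟨hre, hsy, htr⟩ := hequiv
  refine ⟨?_, ?_, ?_, ?_, ?_, ?_, ?_, ?_, ?_⟩
  · rw [hdiaS]; ext w; simp
  · intro X Y _ _; rw [hdiaS, hdiaS, hdiaS]; ext w
    constructor
    · rintro ⟨v, hv, hv' | hv'⟩
      · exact Or.inl ⟨v, hv, hv'⟩
      · exact Or.inr ⟨v, hv, hv'⟩
    · rintro (⟨v, hv, hv'⟩ | ⟨v, hv, hv'⟩)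
      · exact ⟨v, hv, Or.inl hv'⟩
      · exact ⟨v, hv, Or.inr hv'⟩
  · rw [hboxS]; ext w; simp
  · intro X Y _ _; rw [hboxS, hboxS, hboxS]; ext w
    exact ⟨fun h => ⟨fun u v hu hr => (h u v hu hr).1,
        fun u v hu hr => (h u v hu hr).2⟩,
      fun h u v hu hr => ⟨h.1 u v hu hr, h.2 u v hu hr⟩⟩
  · intro X _; rw [hboxS]
    intro w hw
    exact hw w w le_rfl (hre w)
  · intro X _; rw [hdiaS]
    intro w hw
    exact ⟨w, hre w, hw⟩
  · intro X hX; rw [hdiaS, hboxS]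
    rintro w ⟨v, hwv, hvX⟩ u t hu hut
    obtain ⟨y, huy, hyv⟩ := hfr₂ u v ⟨w, hu, hwv⟩
    exact ⟨y, htr (hsy hut) huy, hX hyv hvX⟩
  · intro X _; simp only [hdiaS, hboxS]
    rintro w ⟨v, hwv, hvbox⟩ u t hu hut
    obtain ⟨y, huy, hyv⟩ := hfr₂ u v ⟨w, hu, hwv⟩
    exact hvbox y t hyv (htr (hsy huy) hut)
  · intro X Y _ _; rw [hboxS, hhimpS, hhimpS, hdiaS, hdiaS]
    rintro w hw v hv ⟨t, hvt, htX⟩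
    exact ⟨t, hvt, hw v t hv hvt t le_rfl htX⟩
end

section
/- Let A be a perfect Fischer-Servi algebra and let A₊ = (J∞(A), ≤, R) be its prime structure, where x R y iff x ≤ ◇y and y ≤ ◆x. Then A₊ is an IK-frame: writing x (S ∘ T) z iff there is y with x S y and y T z, one has (R ∘ ≥) ⊆ (≥ ∘ R), (≤ ∘ R) ⊆ (R ∘ ≤), and R = (≥ ∘ R) ∩ (R ∘ ≤), where ≤ is the order of A restricted to J∞(A). If moreover A is a perfect monadic Heyting algebra (i.e. also □x ≤ x, x ≤ ◇x, ◇x ≤ □◇x, ◇□x ≤ □x, and □(x → y) ≤ ◇x → ◇y hold), then R is an equivalence relation on J∞(A), so A₊ is an MIPC-frame. -/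
/-- An element of a complete lattice is completely join-prime if it is not `⊥`
and, whenever it lies below the join of a set, it lies below some member. -/
def CJP {A : Type*} [CompleteLattice A] (j : A) : Prop :=
  j ≠ ⊥ ∧ ∀ S : Set A, j ≤ sSup S → ∃ s ∈ S, j ≤ s

/-- The prime structure `A₊ = (J∞(A), ≤, R)` of a perfect
Fischer-Servi algebra `A`, where `x R y iff x ≤ ◇y and y ≤ ◆x` with
`◆x = ⨅{y : x ≤ □y}`, is an IK-frame; and if `A` is moreover a perfect monadic
Heyting algebra, then `R` is an equivalence relation on `J∞(A)`, so `A₊` is an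
MIPC-frame. -/
theorem stmt_16 {A : Type*} [CompletelyDistribLattice A]
    (dia box : A → A)
    (hgen : ∀ x : A, x = sSup {j : A | CJP j ∧ j ≤ x})
    (hdia : ∀ S : Set A, dia (sSup S) = sSup (dia '' S))
    (hbox : ∀ S : Set A, box (sInf S) = sInf (box '' S))
    (hFS1 : ∀ x y : A, dia (x ⇨ y) ≤ box x ⇨ dia y)
    (hFS2 : ∀ x y : A, (dia x ⇨ box y) ≤ box (x ⇨ y))
    (bdia : A → A) (hbdia : ∀ x : A, bdia x = sInf {y : A | x ≤ box y})
    (R : A → A → Prop) (hR : ∀ x y : A, R x y ↔ (x ≤ dia y ∧ y ≤ bdia x)) :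
    (∀ x z : A, CJP x → CJP z → (∃ y, CJP y ∧ R x y ∧ z ≤ y) →
      ∃ y, CJP y ∧ y ≤ x ∧ R y z) ∧
    (∀ x z : A, CJP x → CJP z → (∃ y, CJP y ∧ x ≤ y ∧ R y z) →
      ∃ y, CJP y ∧ R x y ∧ y ≤ z) ∧
    (∀ x z : A, CJP x → CJP z →
      (R x z ↔ ((∃ y, CJP y ∧ y ≤ x ∧ R y z) ∧ (∃ y, CJP y ∧ R x y ∧ y ≤ z)))) ∧
    ((∀ x : A, box x ≤ x) → (∀ x : A, x ≤ dia x) →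
     (∀ x : A, dia x ≤ box (dia x)) → (∀ x : A, dia (box x) ≤ box x) →
     (∀ x y : A, box (x ⇨ y) ≤ dia x ⇨ dia y) →
      ((∀ x : A, CJP x → R x x) ∧
       (∀ x y : A, CJP x → CJP y → R x y → R y x) ∧
       (∀ x y z : A, CJP x → CJP y → CJP z → R x y → R y z → R x z))) := by
  -- monotonicity of dia
  have dmono : Monotone dia := by
    intro a b hab
    have h := hdia {a, b}
    rw [Set.image_pair, sSup_pair, sSup_pair, sup_eq_right.2 hab] at h
    rw [h]; exact le_sup_left
  -- monotonicity of box
  have bmono : Monotone box := by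
    intro a b hab
    have h := hbox {a, b}
    rw [Set.image_pair, sInf_pair, sInf_pair, inf_eq_left.2 hab] at h
    rw [h]; exact inf_le_right
  -- adjunction for bdia
  have hbd1 : ∀ x t : A, x ≤ box t → bdia x ≤ t := by
    intro x t h; rw [hbdia]; exact sInf_le h
  have hbd2 : ∀ x : A, x ≤ box (bdia x) := by
    intro x
    rw [hbdia, hbox]
    apply le_sInf
    rintro b ⟨t, ht, rfl⟩
    exact ht
  have hbd3 : ∀ x t : A, bdia x ≤ t ↔ x ≤ box t := by
    intro x t
    exact ⟨fun h => (hbd2 x).trans (bmono h), hbd1 x t⟩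
  -- bdia preserves joins
  have hbdS : ∀ S : Set A, bdia (sSup S) = sSup (bdia '' S) := by
    intro S
    apply le_antisymm
    · rw [hbd3]
      apply sSup_le
      intro s hs
      exact (hbd2 s).trans (bmono (le_sSup ⟨s, hs, rfl⟩))
    · apply sSup_le
      rintro b ⟨s, hs, rfl⟩
      rw [hbd3]
      exact (le_sSup hs).trans (hbd2 _)
  have bdmono : Monotone bdia := by
    intro a b hab
    rw [hbd3]
    exact le_trans hab (hbd2 b)
  -- picking a CJP witness under dia
  have pick : ∀ w j : A, CJP j → j ≤ dia w →
      ∃ k, CJP k ∧ k ≤ w ∧ j ≤ dia k := by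
    intro w j hj h
    rw [hgen w, hdia] at h
    obtain ⟨s, ⟨k, ⟨hk1, hk2⟩, rfl⟩, hjs⟩ := hj.2 _ h
    exact ⟨k, hk1, hk2, hjs⟩
  -- picking a CJP witness under bdia
  have pickb : ∀ w j : A, CJP j → j ≤ bdia w →
      ∃ k, CJP k ∧ k ≤ w ∧ j ≤ bdia k := by
    intro w j hj h
    rw [hgen w, hbdS] at h
    obtain ⟨s, ⟨k, ⟨hk1, hk2⟩, rfl⟩, hjs⟩ := hj.2 _ h
    exact ⟨k, hk1, hk2, hjs⟩
  -- Fischer–Servi lemma from FS1 : x ≤ ◇z → x ≤ ◇(z ⊓ ◆x)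
  have lemA : ∀ x z : A, x ≤ dia z → x ≤ dia (z ⊓ bdia x) := by
    intro x z h
    have h2 : z ≤ bdia x ⇨ (z ⊓ bdia x) := by
      rw [le_himp_iff]
    have h3 : x ≤ box (bdia x) ⇨ dia (z ⊓ bdia x) :=
      h.trans ((dmono h2).trans (hFS1 _ _))
    have h4 : x ⊓ box (bdia x) ≤ dia (z ⊓ bdia x) := le_himp_iff.mp h3
    exact le_trans (le_inf le_rfl (hbd2 x)) h4
  -- Fischer–Servi lemma from FS2 : z ≤ ◆x → z ≤ ◆(x ⊓ ◇z)
  have lemB : ∀ x z : A, z ≤ bdia x → z ≤ bdia (x ⊓ dia z) := by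
    intro x z h
    rw [hbdia]
    apply le_sInf
    intro t ht
    have h1 : x ≤ dia z ⇨ box t := le_himp_iff.mpr ht
    have h2 : x ≤ box (z ⇨ t) := h1.trans (hFS2 _ _)
    have h3 : z ≤ z ⇨ t := h.trans (hbd1 _ _ h2)
    have h4 : z ⊓ z ≤ t := le_himp_iff.mp h3
    simpa using h4
  refine ⟨?_, ?_, ?_, ?_⟩
  · -- Claim 1 : (R ∘ ≥) ⊆ (≥ ∘ R)
    rintro x z hx hz ⟨y, hy, hxy, hzy⟩
    obtain ⟨hxd, hyb⟩ := (hR x y).mp hxy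
    have hzb : z ≤ bdia x := hzy.trans hyb
    have h := lemB x z hzb
    obtain ⟨k, hk, hkle, hzk⟩ := pickb _ z hz h
    exact ⟨k, hk, hkle.trans inf_le_left,
      (hR k z).mpr ⟨hkle.trans inf_le_right, hzk⟩⟩
  · -- Claim 2 : (≤ ∘ R) ⊆ (R ∘ ≤)
    rintro x z hx hz ⟨y, hy, hxy, hyz⟩
    obtain ⟨hyd, hzb⟩ := (hR y z).mp hyz
    have hxd : x ≤ dia z := hxy.trans hyd
    have h := lemA x z hxd
    obtain ⟨k, hk, hkle, hxk⟩ := pick _ x hx h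
    exact ⟨k, hk, (hR x k).mpr ⟨hxk, hkle.trans inf_le_right⟩,
      hkle.trans inf_le_left⟩
  · -- Claim 3 : R = (≥ ∘ R) ∩ (R ∘ ≤)
    intro x z hx hz
    constructor
    · intro h
      exact ⟨⟨x, hx, le_rfl, h⟩, ⟨z, hz, h, le_rfl⟩⟩
    · rintro ⟨⟨y₁, _, hy₁x, hy₁z⟩, ⟨y₂, _, hxy₂, hy₂z⟩⟩
      obtain ⟨h1, h2⟩ := (hR y₁ z).mp hy₁z
      obtain ⟨h3, h4⟩ := (hR x y₂).mp hxy₂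
      exact (hR x z).mpr ⟨h3.trans (dmono hy₂z), h2.trans (bdmono hy₁x)⟩
  · -- Monadic case : R is an equivalence relation
    intro hT hTd h4d h4b _
    -- in the monadic case ◆ = ◇
    have hbd : ∀ x : A, bdia x = dia x := by
      intro x
      apply le_antisymm
      · exact hbd1 x (dia x) ((hTd x).trans (h4d x))
      · rw [hbdia]
        apply le_sInf
        intro t ht
        exact (dmono ht).trans ((h4b t).trans (hT t))
    have hdd : ∀ x : A, dia (dia x) ≤ dia x := by
      intro x
      exact (dmono (h4d x)).trans ((h4b (dia x)).trans (hT (dia x)))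
    refine ⟨?_, ?_, ?_⟩
    · intro x _
      exact (hR x x).mpr ⟨hTd x, (hbd x).symm ▸ hTd x⟩
    · intro x y _ _ h
      obtain ⟨h1, h2⟩ := (hR x y).mp h
      rw [hbd] at h2
      exact (hR y x).mpr ⟨h2, (hbd y).symm ▸ h1⟩
    · intro x y z _ _ _ hxy hyz
      obtain ⟨h1, h2⟩ := (hR x y).mp hxy
      obtain ⟨h3, h4⟩ := (hR y z).mp hyz
      rw [hbd] at h2 h4
      refine (hR x z).mpr ⟨h1.trans ((dmono h3).trans (hdd z)), ?_⟩
      rw [hbd]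
      exact h4.trans ((dmono h2).trans (hdd x))
end

section
/- Let A be a perfect Fischer-Servi algebra with prime structure A₊ = (J∞(A), ≤, R), where x R y iff x ≤ ◇y and y ≤ ◆x. Then the map η : A → 𝒫(J∞(A)) given by η(x) = { j ∈ J∞(A) : j ≤ x } is a bijection from A onto the set of downward-closed subsets of the poset (J∞(A), ≤), and it is an isomorphism of Heyting algebras with operators onto the complex algebra (A₊)⁺: for all x, y ∈ A, η(x ∧ y) = η(x) ∩ η(y), η(x ∨ y) = η(x) ∪ η(y), η(⊥) = ∅, η(x → y) = { j ∈ J∞(A) : for all j' ∈ J∞(A) with j' ≤ j, j' ≤ x implies j' ≤ y }, η(◇x) = { j ∈ J∞(A) : ∃j' ∈ J∞(A), j R j' and j' ≤ x }, and η(□x) = { j ∈ J∞(A) : for all j'', j' ∈ J∞(A), if j'' ≤ j and j'' R j' then j' ≤ x }. -/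
/-- For a perfect Fischer-Servi algebra `A` with prime structure
`A₊ = (J∞(A), ≤, R)` (`x R y iff x ≤ ◇y ∧ y ≤ ◆x`), the map
`η(x) = { j ∈ J∞(A) : j ≤ x }` is a bijection from `A` onto the downward-closed
subsets of `(J∞(A), ≤)` and an isomorphism of Heyting algebras with operators
onto the complex algebra `(A₊)⁺`. -/
theorem stmt_17 {A : Type*} [CompletelyDistribLattice A]
    (dia box : A → A)
    (hgen : ∀ x : A, x = sSup {j : A | CJP j ∧ j ≤ x})
    (hdia : ∀ S : Set A, dia (sSup S) = sSup (dia '' S))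
    (hbox : ∀ S : Set A, box (sInf S) = sInf (box '' S))
    (hFS1 : ∀ x y : A, dia (x ⇨ y) ≤ box x ⇨ dia y)
    (hFS2 : ∀ x y : A, (dia x ⇨ box y) ≤ box (x ⇨ y))
    (bdia : A → A) (hbdia : ∀ x : A, bdia x = sInf {y : A | x ≤ box y})
    (Rs : {j : A // CJP j} → {j : A // CJP j} → Prop)
    (hRs : ∀ j j' : {j : A // CJP j},
      Rs j j' ↔ ((j : A) ≤ dia (j' : A) ∧ (j' : A) ≤ bdia (j : A)))
    (η : A → Set {j : A // CJP j})
    (hη : ∀ x : A, η x = {j : {j : A // CJP j} | (j : A) ≤ x}) :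
    Function.Injective η ∧
    (∀ x : A, IsLowerSet (η x)) ∧
    (∀ X : Set {j : A // CJP j}, IsLowerSet X → ∃ x : A, η x = X) ∧
    (∀ x y : A, η (x ⊓ y) = η x ∩ η y) ∧
    (∀ x y : A, η (x ⊔ y) = η x ∪ η y) ∧
    η ⊥ = ∅ ∧
    (∀ x y : A, η (x ⇨ y) =
      {j : {j : A // CJP j} | ∀ j' : {j : A // CJP j},
        j' ≤ j → ((j' : A) ≤ x → (j' : A) ≤ y)}) ∧
    (∀ x : A, η (dia x) =
      {j : {j : A // CJP j} | ∃ j' : {j : A // CJP j}, Rs j j' ∧ (j' : A) ≤ x}) ∧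
    (∀ x : A, η (box x) =
      {j : {j : A // CJP j} | ∀ j'' j' : {j : A // CJP j},
        j'' ≤ j → Rs j'' j' → (j' : A) ≤ x}) := by
  classical
  have hmem : ∀ (x : A) (j : {j : A // CJP j}), j ∈ η x ↔ (j : A) ≤ x := by
    intro x j; rw [hη]; exact Iff.rfl
  have hle : ∀ x y : A, (∀ j : A, CJP j → j ≤ x → j ≤ y) → x ≤ y := by
    intro x y h
    conv_lhs => rw [hgen x]
    exact sSup_le fun j hj => h j hj.1 hj.2
  have hdiamono : ∀ a b : A, a ≤ b → dia a ≤ dia b := by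
    intro a b hab
    have h1 : sSup ({a, b} : Set A) = b := by
      rw [sSup_insert, sSup_singleton, sup_eq_right]; exact hab
    have h2 := hdia {a, b}
    rw [h1, Set.image_insert_eq, Set.image_singleton, sSup_insert, sSup_singleton] at h2
    rw [h2]; exact le_sup_left
  have hboxmono : ∀ a b : A, a ≤ b → box a ≤ box b := by
    intro a b hab
    have h1 : sInf ({a, b} : Set A) = a := by
      rw [sInf_insert, sInf_singleton, inf_eq_left]; exact hab
    have h2 := hbox {a, b}
    rw [h1, Set.image_insert_eq, Set.image_singleton, sInf_insert, sInf_singleton] at h2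
    rw [h2]; exact inf_le_right
  -- adjunction bdia ⊣ box
  have hadj : ∀ x y : A, x ≤ box y ↔ bdia x ≤ y := by
    intro x y
    constructor
    · intro h; rw [hbdia]; exact sInf_le h
    · intro h
      have hx : x ≤ box (bdia x) := by
        rw [hbdia, hbox]
        refine le_sInf ?_
        rintro _ ⟨z, hz, rfl⟩
        exact hz
      exact hx.trans (hboxmono _ _ h)
  -- FS1 consequence : dia x ⊓ box y ≤ dia (x ⊓ y)
  have hkey1 : ∀ x y : A, dia x ⊓ box y ≤ dia (x ⊓ y) := by
    intro x y
    have h1 : x ≤ y ⇨ x ⊓ y := le_himp_iff.mpr le_rfl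
    have h2 : dia x ≤ box y ⇨ dia (x ⊓ y) :=
      (hdiamono _ _ h1).trans (hFS1 y (x ⊓ y))
    exact le_himp_iff.mp h2
  -- for each CJP k there is a largest element not above k
  have hyk : ∀ k : A, CJP k → ∃ yk : A, ∀ z : A, k ≤ z ↔ ¬ z ≤ yk := by
    intro k hk
    refine ⟨sSup {z | ¬ k ≤ z}, fun z => ⟨?_, ?_⟩⟩
    · intro hkz hzy
      obtain ⟨s, hs, hks⟩ := hk.2 _ (hkz.trans hzy)
      exact hs hks
    · intro h
      by_contra hkz
      exact h (le_sSup hkz)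
  -- key dia lemma
  have hkeydia : ∀ j x : A, CJP j → j ≤ dia x →
      ∃ m : A, CJP m ∧ j ≤ dia m ∧ m ≤ bdia j ∧ m ≤ x := by
    intro j x hj hjd
    have h1 : j ≤ box (bdia j) := (hadj j (bdia j)).mpr le_rfl
    have h2 : j ≤ dia (x ⊓ bdia j) := le_trans (le_inf hjd h1) (hkey1 x (bdia j))
    rw [hgen (x ⊓ bdia j), hdia] at h2
    obtain ⟨s, hs, hjs⟩ := hj.2 _ h2
    obtain ⟨m, hm, rfl⟩ := hs
    exact ⟨m, hm.1, hjs, hm.2.trans inf_le_right, hm.2.trans inf_le_left⟩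
  -- key box lemma
  have hkeybox : ∀ j k : A, CJP j → CJP k → k ≤ bdia j →
      ∃ m : A, CJP m ∧ m ≤ j ∧ m ≤ dia k ∧ k ≤ bdia m := by
    intro j k hj hk hkj
    obtain ⟨yk, hyk'⟩ := hyk k hk
    have hknot : ¬ k ≤ k ⇨ yk := by
      intro h
      have h2 : k ≤ yk := by
        have := le_himp_iff.mp h
        simpa using this
      exact (hyk' yk).mp h2 le_rfl
    have hjnot : ¬ j ≤ box (k ⇨ yk) := by
      intro h
      exact hknot (hkj.trans ((hadj j (k ⇨ yk)).mp h))
    have hjnot2 : ¬ j ⊓ dia k ≤ box yk := by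
      intro h
      exact hjnot (le_himp_iff.mpr h |>.trans (hFS2 k yk))
    have hex : ∃ m : A, CJP m ∧ m ≤ j ⊓ dia k ∧ ¬ m ≤ box yk := by
      by_contra hc
      push_neg at hc
      exact hjnot2 (hle _ _ fun m hm hmle => hc m hm hmle)
    obtain ⟨m, hm, hmle, hmnot⟩ := hex
    refine ⟨m, hm, hmle.trans inf_le_left, hmle.trans inf_le_right, ?_⟩
    have : ¬ bdia m ≤ yk := fun h => hmnot ((hadj m yk).mpr h)
    exact (hyk' (bdia m)).mpr this
  refine ⟨?_, ?_, ?_, ?_, ?_, ?_, ?_, ?_, ?_⟩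
  · -- injective
    intro x y hxy
    have h : ∀ a b : A, η a = η b → a ≤ b := by
      intro a b hab
      refine hle a b fun j hj hja => ?_
      have h1 := (hmem a ⟨j, hj⟩).mpr hja
      rw [hab] at h1
      exact (hmem b ⟨j, hj⟩).mp h1
    exact le_antisymm (h x y hxy) (h y x hxy.symm)
  · -- lower sets
    intro x a b hba ha
    rw [hmem] at *
    exact le_trans (Subtype.coe_le_coe.mpr hba) ha
  · -- surjective onto lower sets
    intro X hX
    refine ⟨sSup {a : A | ∃ h : CJP a, (⟨a, h⟩ : {j : A // CJP j}) ∈ X}, ?_⟩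
    ext j
    rw [hmem]
    constructor
    · intro hj
      obtain ⟨s, hs, hjs⟩ := j.2.2 _ hj
      obtain ⟨hcs, hsX⟩ := hs
      exact hX (Subtype.coe_le_coe.mp hjs) hsX
    · intro hj
      exact le_sSup ⟨j.2, by simpa using hj⟩
  · -- meet
    intro x y
    ext j
    simp only [hmem, Set.mem_inter_iff, le_inf_iff]
  · -- join
    intro x y
    ext j
    simp only [hmem, Set.mem_union]
    constructor
    · intro hj
      have h1 : sSup ({x, y} : Set A) = x ⊔ y := by
        rw [sSup_insert, sSup_singleton]
      obtain ⟨s, hs, hjs⟩ := j.2.2 {x, y} (h1.symm ▸ hj)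
      rcases hs with rfl | hs
      · exact Or.inl hjs
      · rw [Set.mem_singleton_iff] at hs
        exact Or.inr (hs ▸ hjs)
    · rintro (h | h)
      · exact h.trans le_sup_left
      · exact h.trans le_sup_right
  · -- bot
    ext j
    rw [hmem]
    simp only [le_bot_iff, Set.mem_empty_iff_false, iff_false]
    exact j.2.1
  · -- himp
    intro x y
    ext j
    rw [hmem]
    simp only [Set.mem_setOf_eq]
    constructor
    · intro hj j' hj'j hj'x
      have h1 : (j' : A) ≤ x ⇨ y := le_trans (Subtype.coe_le_coe.mpr hj'j) hj
      exact le_trans (le_inf le_rfl hj'x) (le_himp_iff.mp h1)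
    · intro h
      rw [le_himp_iff]
      refine hle _ _ fun k hk hkle => ?_
      exact h ⟨k, hk⟩ (Subtype.coe_le_coe.mp (hkle.trans inf_le_left))
        (hkle.trans inf_le_right)
  · -- dia
    intro x
    ext j
    rw [hmem]
    simp only [Set.mem_setOf_eq]
    constructor
    · intro hj
      obtain ⟨m, hm, h1, h2, h3⟩ := hkeydia (j : A) x j.2 hj
      exact ⟨⟨m, hm⟩, (hRs j ⟨m, hm⟩).mpr ⟨h1, h2⟩, h3⟩
    · rintro ⟨j', hR, hj'x⟩
      obtain ⟨h1, _⟩ := (hRs j j').mp hR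
      exact h1.trans (hdiamono _ _ hj'x)
  · -- box
    intro x
    ext j
    rw [hmem]
    simp only [Set.mem_setOf_eq]
    constructor
    · intro hj j'' j' hle'' hR
      obtain ⟨_, h2⟩ := (hRs j'' j').mp hR
      have h3 : (j'' : A) ≤ box x := le_trans (Subtype.coe_le_coe.mpr hle'') hj
      exact h2.trans ((hadj _ _).mp h3)
    · intro h
      rw [hadj]
      refine hle _ _ fun k hk hkle => ?_
      obtain ⟨m, hm, h1, h2, h3⟩ := hkeybox (j : A) k j.2 hk hkle
      exact h ⟨m, hm⟩ ⟨k, hk⟩ (Subtype.coe_le_coe.mp h1)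
        ((hRs ⟨m, hm⟩ ⟨k, hk⟩).mpr ⟨h2, h3⟩)
end

section
/- Let A be a complete lattice with maps ◇, ◆ : A → A satisfying ◇⊥ = ⊥ and ◆⊥ = ⊥, let K be a nonempty set and α ⊆ K × K a relation, and define on K → A the operations (◇^∏ f)(m) = ⨆{ ◇(f n) : m α n } and (◆^∏ f)(m) = ⨆{ ◆(f n) : n α m }. Let x, y ∈ A with x ≠ ⊥ and y ≠ ⊥, let i, j ∈ K, and let b, c : K → A be given by b i = x and b m = ⊥ for m ≠ i, and c j = y and c m = ⊥ for m ≠ j. Then (b ≤ ◇^∏ c and c ≤ ◆^∏ b) if and only if (i α j and x ≤ ◇y and y ≤ ◆x). Hence, under the identification of completely join-prime elements of the product with pairs from J∞(A) × K, the accessibility relation of the prime structure of the product algebra coincides with the product relation R × α, where x R y iff x ≤ ◇y and y ≤ ◆x. -/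
/-- Let `A` be a complete lattice with `◇, ◆ : A → A` satisfying
`◇⊥ = ⊥` and `◆⊥ = ⊥`, `K` a nonempty set, `α ⊆ K × K`, and define on `K → A`
the operations `(◇^∏ f)(m) = ⨆{◇(f n) : m α n}` and
`(◆^∏ f)(m) = ⨆{◆(f n) : n α m}`. For `x, y ≠ ⊥`, `i, j ∈ K` and
`b, c : K → A` supported at `i`, `j` with values `x`, `y` respectively, one has
`b ≤ ◇^∏ c ∧ c ≤ ◆^∏ b` iff `i α j ∧ x ≤ ◇y ∧ y ≤ ◆x`; hence under the
identification of the completely join-prime elements of the product with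
`J∞(A) × K`, the prime-structure accessibility relation of the product algebra
is the product relation `R × α`, where `x R y iff x ≤ ◇y ∧ y ≤ ◆x`. -/
theorem stmt_19 {A K : Type*} [CompleteLattice A] [Nonempty K]
    (dia bdia : A → A) (hdia_bot : dia ⊥ = ⊥) (hbdia_bot : bdia ⊥ = ⊥)
    (α : K → K → Prop)
    (prodDia prodBDia : (K → A) → (K → A))
    (hprodDia : ∀ (f : K → A) (m : K),
      prodDia f m = ⨆ n ∈ {n : K | α m n}, dia (f n))
    (hprodBDia : ∀ (f : K → A) (m : K),
      prodBDia f m = ⨆ n ∈ {n : K | α n m}, bdia (f n))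
    (x y : A) (hx : x ≠ ⊥) (hy : y ≠ ⊥) (i j : K)
    (b c : K → A)
    (hbi : b i = x) (hb : ∀ m : K, m ≠ i → b m = ⊥)
    (hcj : c j = y) (hc : ∀ m : K, m ≠ j → c m = ⊥) :
    (b ≤ prodDia c ∧ c ≤ prodBDia b) ↔ (α i j ∧ x ≤ dia y ∧ y ≤ bdia x) := by

  constructor
  · rintro ⟨h1, h2⟩
    have hαij : α i j := by
      by_contra hα
      have hy' : y ≤ ⊥ := by
        have := h2 j
        rw [hprodBDia, hcj] at this
        refine this.trans (iSup_le fun n => iSup_le fun hn => ?_)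
        have hni : n ≠ i := by rintro rfl; exact hα hn
        rw [hb n hni, hbdia_bot]
      exact hy (le_bot_iff.mp hy')
    refine ⟨hαij, ?_, ?_⟩
    · have := h1 i
      rw [hprodDia, hbi] at this
      refine this.trans (iSup_le fun n => iSup_le fun hn => ?_)
      by_cases hnj : n = j
      · subst hnj; rw [hcj]
      · rw [hc n hnj, hdia_bot]; exact bot_le
    · have := h2 j
      rw [hprodBDia, hcj] at this
      refine this.trans (iSup_le fun n => iSup_le fun hn => ?_)
      by_cases hni : n = i
      · subst hni; rw [hbi]
      · rw [hb n hni, hbdia_bot]; exact bot_le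
  · rintro ⟨hα, hxy, hyx⟩
    constructor
    · intro m
      rw [hprodDia]
      by_cases hmi : m = i
      · subst hmi
        rw [hbi]
        exact hxy.trans (le_iSup_of_le j (le_iSup_of_le hα (by rw [hcj])))
      · rw [hb m hmi]; exact bot_le
    · intro m
      rw [hprodBDia]
      by_cases hmj : m = j
      · subst hmj
        rw [hcj]
        exact hyx.trans (le_iSup_of_le i (le_iSup_of_le hα (by rw [hbi])))
      · rw [hc m hmj]; exact bot_le
end
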